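/- arXiv:1509.08534 — 2 statements merged into one kernel-verified Lean document; each statement's English description precedes it below -/
import Mathlib

section
/- Let A be a commutative ring and n ≥ 1. The projection map Q₂ₙ(A) → 𝒬ₙ(A) sending (f₁, …, fₙ, g₁, …, gₙ, s) to (f₁, …, fₙ, s) induces a well-defined bijection Φ : π₀(Q₂ₙ)(A) → π₀(𝒬ₙ)(A) between the sets of homotopy classes. -/
open Polynomial

/-- The quadric `Q₂ₙ(A)`: the set of tuples `(f₁,…,fₙ,g₁,…,gₙ,s) ∈ A^{2n+1}` with
`∑ fᵢ gᵢ + s(s-1) = 0`. -/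
def Q2 (A : Type*) [CommRing A] (n : ℕ) : Set ((Fin n → A) × (Fin n → A) × A) :=
  {v | ∑ i, v.1 i * v.2.1 i + v.2.2 * (v.2.2 - 1) = 0}

/-- Coordinatewise evaluation at `t : A` of a tuple of polynomials. -/
def evalTuple {A : Type*} [CommRing A] {n : ℕ} (t : A)
    (H : (Fin n → Polynomial A) × (Fin n → Polynomial A) × Polynomial A) :
    (Fin n → A) × (Fin n → A) × A :=
  ⟨fun i => (H.1 i).eval t, fun i => (H.2.1 i).eval t, H.2.2.eval t⟩

/-- Two tuples are elementarily homotopic if they are the evaluations at `T = 0` and `T = 1`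
of an element of `Q₂ₙ(A[T])`. -/
def ElemHomotopic (A : Type*) [CommRing A] (n : ℕ)
    (v w : (Fin n → A) × (Fin n → A) × A) : Prop :=
  ∃ H ∈ Q2 (Polynomial A) n, evalTuple 0 H = v ∧ evalTuple 1 H = w

/-- The ideal `I(v) = (f₁, …, fₙ, s)` attached to `v = (f₁,…,fₙ,g₁,…,gₙ,s)`. -/
def idealOf {A : Type*} [CommRing A] {n : ℕ}
    (v : (Fin n → A) × (Fin n → A) × A) : Ideal A :=
  Ideal.span (Set.range v.1 ∪ {v.2.2})

/-- The set `𝒬ₙ(A)`: tuples `(f₁,…,fₙ,s) ∈ A^{n+1}` such that `∑ fᵢ gᵢ + s(s-1) = 0`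
for some `g₁,…,gₙ ∈ A`. -/
def Q1 (A : Type*) [CommRing A] (n : ℕ) : Set ((Fin n → A) × A) :=
  {v | ∃ g : Fin n → A, ∑ i, v.1 i * g i + v.2 * (v.2 - 1) = 0}

/-- Coordinatewise evaluation at `t : A` for tuples of the shape of `𝒬ₙ`. -/
def evalTuple1 {A : Type*} [CommRing A] {n : ℕ} (t : A)
    (H : (Fin n → Polynomial A) × Polynomial A) : (Fin n → A) × A :=
  ⟨fun i => (H.1 i).eval t, H.2.eval t⟩

/-- Elementary homotopy for `𝒬ₙ`. -/
def ElemHomotopic1 (A : Type*) [CommRing A] (n : ℕ)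
    (v w : (Fin n → A) × A) : Prop :=
  ∃ H ∈ Q1 (Polynomial A) n, evalTuple1 0 H = v ∧ evalTuple1 1 H = w

/-- `π₀(Q₂ₙ)(A)`: the quotient of `Q₂ₙ(A)` by the equivalence relation generated by
elementary homotopy. -/
def Pi0Q2 (A : Type*) [CommRing A] (n : ℕ) : Type _ :=
  Quot (fun v w : Q2 A n => ElemHomotopic A n v.1 w.1)

/-- `π₀(𝒬ₙ)(A)`: the quotient of `𝒬ₙ(A)` by the equivalence relation generated by
elementary homotopy. -/
def Pi0Q1 (A : Type*) [CommRing A] (n : ℕ) : Type _ :=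
  Quot (fun v w : Q1 A n => ElemHomotopic1 A n v.1 w.1)

section Aux
variable {A : Type*} [CommRing A] {n : ℕ}

/-- Linear homotopy between two lifts with the same `(f, s)`. -/
lemma homotopic_of_same_fs (f g g' : Fin n → A) (s : A)
    (h : ∑ i, f i * g i + s * (s - 1) = 0)
    (h' : ∑ i, f i * g' i + s * (s - 1) = 0) :
    ElemHomotopic A n (f, g, s) (f, g', s) := by
  refine ⟨⟨fun i => C (f i), fun i => (1 - X) * C (g i) + X * C (g' i), C s⟩, ?_, ?_, ?_⟩
  · show ∑ i, C (f i) * ((1 - X) * C (g i) + X * C (g' i)) + C s * (C s - 1) = 0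
    have e : ∑ i, C (f i) * ((1 - X) * C (g i) + X * C (g' i))
        = (1 - X) * C (∑ i, f i * g i) + X * C (∑ i, f i * g' i) := by
      rw [map_sum, map_sum, Finset.mul_sum, Finset.mul_sum, ← Finset.sum_add_distrib]
      refine Finset.sum_congr rfl fun i _ => ?_
      rw [map_mul, map_mul]; ring
    have h1 : ∑ i, f i * g i = -(s * (s - 1)) := eq_neg_of_add_eq_zero_left h
    have h2 : ∑ i, f i * g' i = -(s * (s - 1)) := eq_neg_of_add_eq_zero_left h'
    rw [e, h1, h2]
    simp only [map_neg, map_mul, map_sub, map_one]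
    ring
  · simp [evalTuple]
  · simp [evalTuple]

/-- The projected element lies in `Q1`. -/
lemma projMem (v : Q2 A n) : ((v.1.1, v.1.2.2) : (Fin n → A) × A) ∈ Q1 A n :=
  ⟨v.1.2.1, v.2⟩

/-- Forward map on quotients. -/
def piProj : Pi0Q2 A n → Pi0Q1 A n :=
  Quot.lift (fun v => Quot.mk _ ⟨(v.1.1, v.1.2.2), projMem v⟩) (by
    rintro v w ⟨H, hH, h0, h1⟩
    apply Quot.sound
    refine ⟨⟨H.1, H.2.2⟩, ⟨H.2.1, hH⟩, ?_, ?_⟩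
    · have e : evalTuple1 0 (H.1, H.2.2) = ((evalTuple 0 H).1, (evalTuple 0 H).2.2) := rfl
      rw [e, h0]
    · have e : evalTuple1 1 (H.1, H.2.2) = ((evalTuple 1 H).1, (evalTuple 1 H).2.2) := rfl
      rw [e, h1])

/-- Lift of an element of `Q1` to `Pi0Q2`, choosing a witness `g`. -/
noncomputable def liftQ1 (v : Q1 A n) : Pi0Q2 A n :=
  Quot.mk _ ⟨(v.1.1, v.2.choose, v.1.2), v.2.choose_spec⟩

lemma liftQ1_eq (v : Q1 A n) (g : Fin n → A)
    (hg : ∑ i, v.1.1 i * g i + v.1.2 * (v.1.2 - 1) = 0) :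
    liftQ1 v = Quot.mk _ ⟨(v.1.1, g, v.1.2), hg⟩ :=
  Quot.sound (homotopic_of_same_fs _ _ _ _ v.2.choose_spec hg)

/-- Backward map on quotients. -/
noncomputable def piLift : Pi0Q1 A n → Pi0Q2 A n :=
  Quot.lift liftQ1 (by
    rintro v w ⟨⟨F, S⟩, ⟨G, hG⟩, h0, h1⟩
    have hmem : ∀ t : A,
        ∑ i, (F i).eval t * (G i).eval t + S.eval t * (S.eval t - 1) = 0 := by
      intro t
      have := congrArg (Polynomial.eval t) hG
      simpa [Polynomial.eval_finset_sum] using this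
    have hv1 : v.1 = ((fun i => (F i).eval 0), S.eval 0) := h0.symm
    have hw1 : w.1 = ((fun i => (F i).eval 1), S.eval 1) := h1.symm
    have e0 : ∑ i, v.1.1 i * (G i).eval 0 + v.1.2 * (v.1.2 - 1) = 0 := by
      rw [hv1]; exact hmem 0
    have e1 : ∑ i, w.1.1 i * (G i).eval 1 + w.1.2 * (w.1.2 - 1) = 0 := by
      rw [hw1]; exact hmem 1
    rw [liftQ1_eq v (fun i => (G i).eval 0) e0, liftQ1_eq w (fun i => (G i).eval 1) e1]
    apply Quot.sound
    refine ⟨⟨F, G, S⟩, hG, ?_, ?_⟩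
    · show ((fun i => (F i).eval 0), (fun i => (G i).eval 0), S.eval 0)
        = (v.1.1, (fun i => (G i).eval 0), v.1.2)
      rw [hv1]
    · show ((fun i => (F i).eval 1), (fun i => (G i).eval 1), S.eval 1)
        = (w.1.1, (fun i => (G i).eval 1), w.1.2)
      rw [hw1])

end Aux

/-- The projection `(f₁,…,fₙ,g₁,…,gₙ,s) ↦ (f₁,…,fₙ,s)` induces a
well-defined bijection `Φ : π₀(Q₂ₙ)(A) → π₀(𝒬ₙ)(A)`. -/
theorem pi0_projection_bijection (A : Type*) [CommRing A] (n : ℕ) (hn : 1 ≤ n) :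
    ∃ Φ : Pi0Q2 A n ≃ Pi0Q1 A n,
      ∀ v : Q2 A n,
        Φ (Quot.mk _ v) = Quot.mk _ ⟨(v.1.1, v.1.2.2), ⟨v.1.2.1, v.2⟩⟩ := by
  classical
  refine ⟨⟨piProj, piLift, ?_, ?_⟩, ?_⟩
  · intro x
    induction x using Quot.ind with
    | _ v =>
      show piLift (Quot.mk _ ⟨(v.1.1, v.1.2.2), projMem v⟩) = Quot.mk _ v
      show liftQ1 ⟨(v.1.1, v.1.2.2), projMem v⟩ = Quot.mk _ v
      rw [liftQ1_eq ⟨(v.1.1, v.1.2.2), projMem v⟩ v.1.2.1 v.2]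
  · intro x
    induction x using Quot.ind with
    | _ v =>
      show piProj (liftQ1 v) = Quot.mk _ v
      show Quot.mk _ _ = Quot.mk _ v
      exact congrArg _ (Subtype.ext rfl)
  · intro v
    exact congrArg _ (Subtype.ext rfl)
end

section
/- Let A be a commutative ring and let f ∈ A[X] be a monic polynomial of degree d ≥ 1. Then there is a polynomial G ∈ A[X, T] such that the image of G in the Laurent polynomial ring A[X, T, T⁻¹] equals T^d · f(X − T + T⁻¹), and moreover G(X, 1) = f(X) and G(X, 0) = 1. -/
open Polynomial LaurentPolynomial

/-- Let `A` be a commutative ring and `f ∈ A[X]` monic of degree `d ≥ 1`.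
Then there is `G ∈ A[X][T]` whose image in the Laurent polynomial ring `A[X][T, T⁻¹]` is
`T^d · f(X - T + T⁻¹)`, and moreover `G(X, 1) = f(X)` and `G(X, 0) = 1`. -/
theorem monic_double_monic_transform (A : Type*) [CommRing A] (f : Polynomial A) (d : ℕ)
    (hd : 1 ≤ d) (hf : f.Monic) (hdeg : f.natDegree = d) :
    ∃ G : Polynomial (Polynomial A),
      Polynomial.toLaurent G =
        (LaurentPolynomial.T (d : ℤ)) *
          Polynomial.aeval
            (LaurentPolynomial.C (Polynomial.X : Polynomial A) -
              LaurentPolynomial.T 1 + LaurentPolynomial.T (-1)) f ∧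
      G.eval (1 : Polynomial A) = f ∧ G.eval (0 : Polynomial A) = 1 := by
  refine ⟨∑ i ∈ Finset.range (d+1), Polynomial.C (Polynomial.C (f.coeff i)) * X ^ (d - i)
      * (Polynomial.C (Polynomial.X (R := A)) * X - X ^ 2 + 1) ^ i, ?_, ?_, ?_⟩
  · rw [Polynomial.aeval_eq_sum_range' (n := d+1) (by omega), Finset.mul_sum, map_sum]
    refine Finset.sum_congr rfl fun i hi => ?_
    have hi' : i ≤ d := by simpa using Nat.lt_succ_iff.mp (Finset.mem_range.mp hi)
    simp only [map_mul, map_pow, map_add, map_sub, map_one, Polynomial.toLaurent_X,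
      Polynomial.toLaurent_C, T_pow, one_mul, mul_one]
    have key : (T 1 * (LaurentPolynomial.C (Polynomial.X (R := A)) - T 1 + T (-1)))
        = LaurentPolynomial.C (Polynomial.X (R := A)) * T 1 - T ((2:ℕ) : ℤ) + 1 := by
      ring_nf
      rw [← T_add]
      norm_num
      ring
    have hT : T (R := Polynomial A) ((d:ℤ)) = T (((d - i : ℕ) : ℤ)) * T ((i : ℤ)) := by
      rw [← T_add]; congr 1; omega
    rw [Algebra.smul_def, LaurentPolynomial.algebraMap_apply, hT, ← key, mul_pow, T_pow, mul_one]
    simp only [Polynomial.algebraMap_eq]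
    ring
  · rw [Polynomial.eval_finset_sum]
    conv_rhs => rw [f.as_sum_range' (d+1) (by omega)]
    refine Finset.sum_congr rfl fun i hi => ?_
    simp [← Polynomial.C_mul_X_pow_eq_monomial]
  · rw [Polynomial.eval_finset_sum]
    rw [Finset.sum_eq_single d]
    · have : f.coeff d = 1 := by rw [← hdeg]; exact hf
      simp [this]
    · intro i hi hne
      have hlt : i < d := by simp at hi; omega
      simp [zero_pow (Nat.sub_ne_zero_of_lt hlt)]
    · intro h; exact absurd (Finset.mem_range.mpr (by omega)) h
end
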